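/- In Cl(ℝ²), let M = a + v + Ib with v = x e₁ + y e₂ and I = e₁e₂, and suppose c² = (a + A)/2 where A² = a² − x² − y² + b² with A real, c real nonzero. Then S = (M + A)/(2c) satisfies S² = M. -/
import Mathlib


noncomputable section
open CliffordAlgebra

/-- The Euclidean quadratic form on `ℝ²`. -/
def Q2 : QuadraticForm ℝ (Fin 2 → ℝ) :=
  QuadraticMap.weightedSumSquares ℝ (fun _ : Fin 2 => (1 : ℝ))

/-- The Clifford algebra `Cl(ℝ²)`. -/
abbrev Cl2 := CliffordAlgebra Q2

/-- The orthonormal basis vectors `e₁, e₂` of `Cl(ℝ²)`. -/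
def e (i : Fin 2) : Cl2 := ι Q2 (Pi.single i 1)

lemma e_sq (i : Fin 2) : e i * e i = 1 := by
  rw [e, ι_sq_scalar]
  have : Q2 (Pi.single i 1) = 1 := by
    simp [Q2, QuadraticMap.weightedSumSquares_apply, Pi.single_apply]
  rw [this, map_one]

lemma e_anticomm : e 1 * e 0 = -(e 0 * e 1) := by
  have h := CliffordAlgebra.ι_mul_ι_add_swap (Q := Q2) (Pi.single 0 1) (Pi.single 1 1)
  have hpolar : QuadraticMap.polar Q2 (Pi.single (0 : Fin 2) 1) (Pi.single 1 1) = 0 := by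
    simp [QuadraticMap.polar, Q2, QuadraticMap.weightedSumSquares_apply, Pi.single_apply,
      Fin.sum_univ_two]
  rw [hpolar, map_zero] at h
  rw [e, e]
  linear_combination (norm := noncomm_ring) h

/-- Square root of a multivector in `Cl(ℝ²)`: if `A² = a² − x² − y² + b²` (the real
amplitude) and `c ≠ 0` with `c² = (a + A)/2`, then `S = (M + A)/(2c)` satisfies `S² = M`. -/
theorem multivector_sqrt (a x y b A c : ℝ)
    (hA : A ^ 2 = a ^ 2 - x ^ 2 - y ^ 2 + b ^ 2)
    (hc : c ≠ 0) (hc2 : c ^ 2 = (a + A) / 2)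
    (M S : Cl2)
    (hM : M = algebraMap ℝ Cl2 a + x • e 0 + y • e 1 + b • (e 0 * e 1))
    (hS : S = (2 * c)⁻¹ • (M + algebraMap ℝ Cl2 A)) :
    S * S = M := by
  have h00 := e_sq 0
  have h11 := e_sq 1
  have h10 := e_anticomm
  have h001 : e 0 * (e 0 * e 1) = e 1 := by rw [← mul_assoc, h00, one_mul]
  have h101 : e 1 * (e 0 * e 1) = -e 0 := by
    rw [← mul_assoc, h10, neg_mul, mul_assoc, h11, mul_one]
  have h010 : (e 0 * e 1) * e 0 = -e 1 := by
    rw [mul_assoc, h10, mul_neg, h001]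
  have h011 : (e 0 * e 1) * e 1 = e 0 := by rw [mul_assoc, h11, mul_one]
  have h0101 : (e 0 * e 1) * (e 0 * e 1) = -1 := by
    rw [← mul_assoc, h010, neg_mul, h11]
  -- key identity: M * M = (2a) • M - A² • 1
  have hMM : M * M = (2 * a) • M - algebraMap ℝ Cl2 (A ^ 2) := by
    rw [hA]
    subst hM
    simp only [Algebra.algebraMap_eq_smul_one, mul_add, add_mul, Algebra.mul_smul_comm,
      Algebra.smul_mul_assoc, smul_smul, one_mul, mul_one, h00, h11, h10, h001, h101,
      h010, h011, h0101, smul_neg, smul_add]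
    module
  -- now compute S * S
  have hAM : (M + algebraMap ℝ Cl2 A) * (M + algebraMap ℝ Cl2 A) = (4 * c ^ 2) • M := by
    rw [mul_add, add_mul, add_mul, hMM, ← map_mul, show A * A = A ^ 2 from (sq A).symm]
    simp only [Algebra.algebraMap_eq_smul_one, Algebra.mul_smul_comm, Algebra.smul_mul_assoc,
      one_mul, mul_one]
    have h4 : (4 * c ^ 2 : ℝ) = 2 * a + (A + A) := by rw [hc2]; ring
    rw [h4]
    module
  rw [hS, smul_mul_smul_comm, hAM, smul_smul]
  rw [show ((2 * c)⁻¹ * (2 * c)⁻¹ * (4 * c ^ 2) : ℝ) = 1 by field_simp; ring, one_smul]
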